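/- Let t ≥ 1, n = 2^t, y = (y₁, y₂) ∈ ℝ^{2n}, and suppose x = (x₁, x₂) ∈ BW_{2n} satisfies ‖y − x‖² < d(BW_{2n})/4. Then v = x₂ − x₁ is the unique point of RBW_n with ‖(y₂ − x₁) − v‖² < d(RBW_n)/4, and symmetrically x₁ − x₂ is the unique point w of RBW_n with ‖(y₁ − x₂) − w‖² < d(RBW_n)/4. -/

import Mathlib

open Matrix

noncomputable section

/-- `Rmat n` is the `n × n` matrix `I_{n/2} ⊗ R(2)`, block diagonal with
`2 × 2` blocks `[[1, 1], [1, -1]]`, acting on row vectors on the right. -/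
def Rmat (n : ℕ) : Matrix (Fin n) (Fin n) ℝ :=
  Matrix.of fun i j =>
    if (i : ℕ) / 2 = (j : ℕ) / 2 then
      if (i : ℕ) % 2 = 1 ∧ (j : ℕ) % 2 = 1 then -1 else 1
    else 0

/-- Concatenation `(u, v)` of two `2^t`-dimensional vectors into a
`2^(t+1)`-dimensional vector. -/
def concat {t : ℕ} (u v : Fin (2 ^ t) → ℝ) : Fin (2 ^ (t + 1)) → ℝ := fun i =>
  if h : (i : ℕ) < 2 ^ t then u ⟨i, h⟩
  else v ⟨(i : ℕ) - 2 ^ t, by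
    have hi := i.isLt
    have h2 : 2 ^ (t + 1) = 2 ^ t + 2 ^ t := by rw [pow_succ]; ring
    omega⟩

/-- The Barnes–Wall lattices `BW_{2^t} ⊆ ℝ^{2^t}`, defined recursively by
`BW_2 = ℤ²` and `BW_{2n} = {(u, u + v) : u ∈ BW_n, v ∈ BW_n · R(n)}`. -/
def BW : ∀ t : ℕ, Set (Fin (2 ^ t) → ℝ)
  | 0 => {x | ∀ i, ∃ z : ℤ, x i = (z : ℝ)}
  | (t + 1) =>
    {x | ∃ u v : Fin (2 ^ t) → ℝ, u ∈ BW t ∧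
      (∃ w ∈ BW t, v = Matrix.vecMul w (Rmat (2 ^ t))) ∧ x = concat u (u + v)}

/-- `RBW_n = {x · R(n) : x ∈ BW_n}`. -/
def RBW (t : ℕ) : Set (Fin (2 ^ t) → ℝ) :=
  (fun x => Matrix.vecMul x (Rmat (2 ^ t))) '' BW t

/-- Squared Euclidean norm. -/
def sqnorm {m : ℕ} (x : Fin m → ℝ) : ℝ := ∑ i, x i ^ 2

/-- `minDist Λ` is the minimum of `‖x‖²` over nonzero `x ∈ Λ`. -/
def minDist {m : ℕ} (Λ : Set (Fin m → ℝ)) : ℝ :=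
  sInf (sqnorm '' {x ∈ Λ | x ≠ 0})

/-!
If `(x₁, x₂) ∈ BW_{2n}` then `x₂ - x₁ ∈ RBW_n`, and `‖y - x‖² = ‖y₁ - x₁‖² + ‖y₂ - x₂‖²`.
Since `v ↦ (0, v)` embeds `RBW_n` isometrically into `BW_{2n}`, `d(BW_{2n}) ≤ d(RBW_n)`, so
`(y₂ - x₁) - (x₂ - x₁) = y₂ - x₂` and `(y₁ - x₂) - (x₁ - x₂) = y₁ - x₁` are both shorter than
the packing radius of `RBW_n`. Two lattice points within the packing radius of one point coincide.
-/

lemma two_pow_succ_eq_add (t : ℕ) : 2 ^ (t + 1) = 2 ^ t + 2 ^ t := by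
  rw [pow_succ, mul_two]

lemma concat_eq_append {t : ℕ} (u v : Fin (2 ^ t) → ℝ) :
    concat u v = Fin.append u v ∘ Fin.cast (two_pow_succ_eq_add t) := by
  funext i
  obtain ⟨j, rfl⟩ := (finCongr (two_pow_succ_eq_add t).symm).surjective i
  refine Fin.addCases (fun k => ?_) (fun k => ?_) j
  all_goals
    simp only [finCongr_apply, Function.comp_apply, Fin.cast_cast, Fin.cast_eq_self,
      Fin.append_left, Fin.append_right]
    simp [concat]

lemma concat_sub_concat {t : ℕ} (a b c d : Fin (2 ^ t) → ℝ) :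
    concat a b - concat c d = concat (a - c) (b - d) := by
  funext i
  simp only [Pi.sub_apply, concat]
  split_ifs <;> rfl

lemma concat_zero_zero {t : ℕ} : concat (0 : Fin (2 ^ t) → ℝ) 0 = 0 := by
  funext i
  simp only [concat]
  split_ifs <;> rfl

lemma concat_inj {t : ℕ} {a b c d : Fin (2 ^ t) → ℝ} :
    concat a b = concat c d ↔ a = c ∧ b = d := by
  refine ⟨fun h => ?_, fun ⟨hac, hbd⟩ => hac ▸ hbd ▸ rfl⟩
  rw [concat_eq_append, concat_eq_append] at h
  have happ := (finCongr (two_pow_succ_eq_add t)).surjective.injective_comp_right h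
  exact ⟨funext fun i => by simpa only [Fin.append_left] using congrFun happ (Fin.castAdd _ i),
    funext fun i => by simpa only [Fin.append_right] using congrFun happ (Fin.natAdd _ i)⟩

lemma sqnorm_nonneg {m : ℕ} (x : Fin m → ℝ) : 0 ≤ sqnorm x :=
  Finset.sum_nonneg fun i _ => sq_nonneg (x i)

lemma sqnorm_comp_cast {m n : ℕ} (h : m = n) (x : Fin n → ℝ) :
    sqnorm (x ∘ Fin.cast h) = sqnorm x :=
  Fintype.sum_equiv (finCongr h) _ _ fun _ => rfl

lemma sqnorm_append {m n : ℕ} (u : Fin m → ℝ) (v : Fin n → ℝ) :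
    sqnorm (Fin.append u v) = sqnorm u + sqnorm v := by
  simp [sqnorm, Fin.sum_univ_add]

lemma sqnorm_concat {t : ℕ} (u v : Fin (2 ^ t) → ℝ) :
    sqnorm (concat u v) = sqnorm u + sqnorm v := by
  rw [concat_eq_append, sqnorm_comp_cast, sqnorm_append]

lemma sqnorm_sub_le {m : ℕ} (x y : Fin m → ℝ) :
    sqnorm (x - y) ≤ 2 * (sqnorm x + sqnorm y) := by
  rw [sqnorm, sqnorm, sqnorm, ← Finset.sum_add_distrib, Finset.mul_sum]
  exact Finset.sum_le_sum fun i _ => by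
    simp only [Pi.sub_apply]; nlinarith [sq_nonneg (x i + y i)]

lemma minDist_le_sqnorm {m : ℕ} {Λ : Set (Fin m → ℝ)} {x : Fin m → ℝ} (hx : x ∈ Λ)
    (hx0 : x ≠ 0) : minDist Λ ≤ sqnorm x :=
  csInf_le ⟨0, by rintro _ ⟨y, -, rfl⟩; exact sqnorm_nonneg y⟩ ⟨x, ⟨hx, hx0⟩, rfl⟩

lemma minDist_le_minDist {m n : ℕ} {Λ : Set (Fin m → ℝ)} {Γ : Set (Fin n → ℝ)}
    (hΓ : ∃ y ∈ Γ, y ≠ 0)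
    (h : ∀ y ∈ Γ, y ≠ 0 → ∃ x ∈ Λ, x ≠ 0 ∧ sqnorm x ≤ sqnorm y) :
    minDist Λ ≤ minDist Γ := by
  obtain ⟨y₀, hy₀, hy₀0⟩ := hΓ
  refine le_csInf ⟨_, y₀, ⟨hy₀, hy₀0⟩, rfl⟩ ?_
  rintro _ ⟨y, ⟨hy, hy0⟩, rfl⟩
  obtain ⟨x, hx, hx0, hxy⟩ := h y hy hy0
  exact (minDist_le_sqnorm hx hx0).trans hxy

lemma mem_and_sqnorm_sub_lt_iff {m : ℕ} {Λ : AddSubgroup (Fin m → ℝ)} {g z : Fin m → ℝ}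
    (hz : z ∈ Λ) (hgz : sqnorm (g - z) < minDist (Λ : Set (Fin m → ℝ)) / 4)
    (v : Fin m → ℝ) :
    (v ∈ Λ ∧ sqnorm (g - v) < minDist (Λ : Set (Fin m → ℝ)) / 4) ↔ v = z := by
  refine ⟨fun ⟨hv, hgv⟩ => ?_, fun hvz => hvz ▸ ⟨hz, hgz⟩⟩
  by_contra hvz
  have hmin := minDist_le_sqnorm (Λ.sub_mem hz hv) (sub_ne_zero.mpr (Ne.symm hvz))
  have htri := sqnorm_sub_le (g - v) (g - z)
  rw [sub_sub_sub_cancel_left] at htri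
  linarith

lemma zero_mem_BW : ∀ t, (0 : Fin (2 ^ t) → ℝ) ∈ BW t
  | 0 => fun _ => ⟨0, by simp⟩
  | t + 1 => ⟨0, 0, zero_mem_BW t, ⟨0, zero_mem_BW t, (zero_vecMul _).symm⟩,
      by rw [zero_add, concat_zero_zero]⟩

lemma sub_mem_BW : ∀ {t} {a b : Fin (2 ^ t) → ℝ}, a ∈ BW t → b ∈ BW t → a - b ∈ BW t
  | 0, _, _, ha, hb => fun i => by
    obtain ⟨m, hm⟩ := ha i
    obtain ⟨n, hn⟩ := hb i
    exact ⟨m - n, by simp [hm, hn]⟩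
  | _ + 1, _, _, ⟨u, _, hu, ⟨w, hw, rfl⟩, rfl⟩, ⟨u', _, hu', ⟨w', hw', rfl⟩, rfl⟩ =>
    ⟨u - u', _, sub_mem_BW hu hu', ⟨w - w', sub_mem_BW hw hw', rfl⟩, by
      rw [concat_sub_concat, sub_vecMul]; abel_nf⟩

def bwAddSubgroup (t : ℕ) : AddSubgroup (Fin (2 ^ t) → ℝ) :=
  AddSubgroup.ofSub (BW t) ⟨0, zero_mem_BW t⟩ fun _ ha _ hb => by
    simpa [sub_eq_add_neg] using sub_mem_BW ha hb

def rbwAddSubgroup (t : ℕ) : AddSubgroup (Fin (2 ^ t) → ℝ) :=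
  (bwAddSubgroup t).map (vecMulLinear (Rmat (2 ^ t))).toAddMonoidHom

lemma coe_rbwAddSubgroup (t : ℕ) : (rbwAddSubgroup t : Set (Fin (2 ^ t) → ℝ)) = RBW t := rfl

lemma concat_mem_BW_succ_iff {t : ℕ} {x₁ x₂ : Fin (2 ^ t) → ℝ} :
    concat x₁ x₂ ∈ BW (t + 1) ↔ x₁ ∈ BW t ∧ x₂ - x₁ ∈ RBW t := by
  constructor
  · rintro ⟨u, _, hu, ⟨w, hw, rfl⟩, h⟩
    obtain ⟨rfl, rfl⟩ := concat_inj.1 h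
    exact ⟨hu, w, hw, (add_sub_cancel_left _ _).symm⟩
  · rintro ⟨hx₁, w, hw, hv⟩
    exact ⟨x₁, x₂ - x₁, hx₁, ⟨w, hw, hv.symm⟩, by rw [add_sub_cancel]⟩

lemma one_mem_BW : ∀ t, (1 : Fin (2 ^ t) → ℝ) ∈ BW t
  | 0 => fun _ => ⟨1, by simp⟩
  | t + 1 => ⟨1, 0, one_mem_BW t, ⟨0, zero_mem_BW t, (zero_vecMul _).symm⟩, by
      rw [add_zero]; funext i; simp only [concat]; split_ifs <;> rfl⟩

lemma exists_ne_zero_mem_RBW (t : ℕ) : ∃ v ∈ RBW t, v ≠ 0 := by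
  let j₀ : Fin (2 ^ t) := ⟨0, Nat.two_pow_pos t⟩
  refine ⟨_, ⟨1, one_mem_BW t, rfl⟩, fun h => ?_⟩
  have hcol : ∀ i, 0 ≤ Rmat (2 ^ t) i j₀ := fun i => by
    simp only [Rmat, of_apply, j₀]
    split_ifs <;> simp_all
  have hsum : 1 ≤ ∑ i, Rmat (2 ^ t) i j₀ := by
    simpa [Rmat, j₀] using Finset.single_le_sum (fun i _ => hcol i) (Finset.mem_univ j₀)
  have hzero := congrFun h j₀
  simp only [vecMul, dotProduct, Pi.one_apply, one_mul, Pi.zero_apply] at hzero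
  linarith

lemma minDist_BW_succ_le_minDist_RBW (t : ℕ) : minDist (BW (t + 1)) ≤ minDist (RBW t) :=
  minDist_le_minDist (exists_ne_zero_mem_RBW t) fun v hv hv0 =>
    ⟨concat 0 v, concat_mem_BW_succ_iff.2 ⟨zero_mem_BW t, by rwa [sub_zero]⟩,
      fun h => hv0 (concat_inj.1 (h.trans concat_zero_zero.symm)).2,
      le_of_eq (by rw [sqnorm_concat]; simp [sqnorm])⟩

/-- If `x = (x₁,x₂) ∈ BW_{2n}` and `‖y − x‖² < d(BW_{2n})/4`, then
`x₂ − x₁` is the unique point `v ∈ RBW_n` with `‖(y₂ − x₁) − v‖² < d(RBW_n)/4`,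
and symmetrically `x₁ − x₂` is the unique point `w ∈ RBW_n` with
`‖(y₁ − x₂) − w‖² < d(RBW_n)/4`. -/
theorem bw_unique_difference_decoding :
    ∀ t : ℕ, 1 ≤ t → ∀ y₁ y₂ x₁ x₂ : Fin (2 ^ t) → ℝ,
      concat x₁ x₂ ∈ BW (t + 1) →
      sqnorm (concat y₁ y₂ - concat x₁ x₂) < minDist (BW (t + 1)) / 4 →
      (∀ v : Fin (2 ^ t) → ℝ,
        (v ∈ RBW t ∧ sqnorm (y₂ - x₁ - v) < minDist (RBW t) / 4) ↔ v = x₂ - x₁) ∧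
      (∀ w : Fin (2 ^ t) → ℝ,
        (w ∈ RBW t ∧ sqnorm (y₁ - x₂ - w) < minDist (RBW t) / 4) ↔ w = x₁ - x₂) := by
  intro t _ y₁ y₂ x₁ x₂ hx hclose
  have hv : x₂ - x₁ ∈ rbwAddSubgroup t := (concat_mem_BW_succ_iff.1 hx).2
  have hw : x₁ - x₂ ∈ rbwAddSubgroup t := neg_sub x₂ x₁ ▸ neg_mem hv
  rw [concat_sub_concat, sqnorm_concat] at hclose
  have hmin := minDist_BW_succ_le_minDist_RBW t
  have h₁ := sqnorm_nonneg (y₁ - x₁)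
  have h₂ := sqnorm_nonneg (y₂ - x₂)
  refine ⟨mem_and_sqnorm_sub_lt_iff hv ?_, mem_and_sqnorm_sub_lt_iff hw ?_⟩
  · rw [coe_rbwAddSubgroup, sub_sub_sub_cancel_right]; linarith
  · rw [coe_rbwAddSubgroup, sub_sub_sub_cancel_right]; linarith
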